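/- Let A be a finite-dimensional commutative ℂ-algebra with a linear functional t_A: A → ℂ, and let E be a finite-dimensional ℂ-algebra with a linear functional t: E → ℂ satisfying t(x·y) = t(y·x) for all x, y ∈ E. Let τ_*: A → E and τ^*: E → A be linear maps satisfying the adjointness t(φ·τ_*(a)) = t_A(τ^*(φ)·a) for all φ ∈ E and a ∈ A, let P: E → E be a linear map, and let Q ∈ A. Suppose there is a basis (ψ_i)_{i ∈ I} of E and a family (ψ^i)_{i ∈ I} in E with t(ψ^i·ψ_j) = δ_{ij} such that the unoriented Cardy condition τ_*(Q) = Σ_{i ∈ I} ψ^i·P(ψ_i) holds. Then for every φ ∈ E, t_A(τ^*(φ)·Q) equals the trace of the ℂ-linear endomorphism of E sending x to P(x)·φ. -/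

import Mathlib

/-!
Since `t (ψ^i * -)` is the `i`-th coordinate functional of the basis `ψ`, the trace of any
endomorphism `f` is `∑ i, t (ψ^i * f ψ_i)`. Pairing the Cardy condition with `φ` through the
adjointness and moving `φ` to the right by cyclicity of `t` gives exactly this sum for
`f = (· * φ) ∘ P`.
-/

namespace Module.Basis

variable {R E I : Type*} [CommSemiring R] [Semiring E] [Algebra R E] [DecidableEq I]

theorem apply_mul_eq_repr_of_dual (t : E →ₗ[R] R) (ψ : Basis I R E) (ψd : I → E)
    (hdual : ∀ i j, t (ψd i * ψ j) = if i = j then 1 else 0) (i : I) (x : E) :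
    t (ψd i * x) = ψ.repr x i := by
  have hcoord : t ∘ₗ LinearMap.mulLeft R (ψd i) = ψ.coord i :=
    ψ.ext fun j => by simp [hdual, Finsupp.single_apply, eq_comm]
  exact LinearMap.congr_fun hcoord x

theorem trace_eq_sum_apply_mul_of_dual [Fintype I] (t : E →ₗ[R] R) (ψ : Basis I R E)
    (ψd : I → E) (hdual : ∀ i j, t (ψd i * ψ j) = if i = j then 1 else 0) (f : E →ₗ[R] E) :
    LinearMap.trace R E f = ∑ i, t (ψd i * f (ψ i)) := by
  simp only [LinearMap.trace_eq_matrix_trace R ψ, Matrix.trace, Matrix.diag_apply,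
    LinearMap.toMatrix_apply, apply_mul_eq_repr_of_dual t ψ ψd hdual]

end Module.Basis

theorem stmt18_general {A E : Type*} [CommRing A] [Algebra ℂ A]
    [Ring E] [Algebra ℂ E]
    (tA : A →ₗ[ℂ] ℂ) (t : E →ₗ[ℂ] ℂ)
    (ht : ∀ x y : E, t (x * y) = t (y * x))
    (τs : A →ₗ[ℂ] E) (τb : E →ₗ[ℂ] A)
    (hadj : ∀ (φ : E) (a : A), t (φ * τs a) = tA (τb φ * a))
    (P : E →ₗ[ℂ] E) (Q : A)
    {I : Type*} [Fintype I] [DecidableEq I]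
    (ψ : Module.Basis I ℂ E) (ψd : I → E)
    (hdual : ∀ i j, t (ψd i * ψ j) = if i = j then 1 else 0)
    (hCardy : τs Q = ∑ i, ψd i * P (ψ i)) :
    ∀ φ : E, tA (τb φ * Q) =
      LinearMap.trace ℂ E (LinearMap.mulRight ℂ φ ∘ₗ P) := by
  intro φ
  rw [ψ.trace_eq_sum_apply_mul_of_dual t ψd hdual, ← hadj, hCardy, Finset.mul_sum, map_sum]
  refine Finset.sum_congr rfl fun i _ => ?_
  rw [ht, mul_assoc, LinearMap.comp_apply, LinearMap.mulRight_apply]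

/-- Proposition 3.4(2) of the paper, the baggy unoriented Cardy
condition. Given closed sector `(A,t_A,Q)`, open sector `(E,t)` with trace `t`,
boundary-bulk `τ^* = τb`, bulk-boundary `τ_* = τs`, adjointness, and the unoriented Cardy
condition for a basis `(ψ_i)` with dual family `(ψ^i)`, one has
`t_A(τ^*(φ) Q) = tr (x ↦ P(x)φ)` for every `φ ∈ E`. -/
theorem stmt18 {A E : Type*} [CommRing A] [Algebra ℂ A] [FiniteDimensional ℂ A]
    [Ring E] [Algebra ℂ E] [FiniteDimensional ℂ E]
    (tA : A →ₗ[ℂ] ℂ) (t : E →ₗ[ℂ] ℂ)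
    (ht : ∀ x y : E, t (x * y) = t (y * x))
    (τs : A →ₗ[ℂ] E) (τb : E →ₗ[ℂ] A)
    (hadj : ∀ (φ : E) (a : A), t (φ * τs a) = tA (τb φ * a))
    (P : E →ₗ[ℂ] E) (Q : A)
    {I : Type*} [Fintype I] [DecidableEq I]
    (ψ : Module.Basis I ℂ E) (ψd : I → E)
    (hdual : ∀ i j, t (ψd i * ψ j) = if i = j then 1 else 0)
    (hCardy : τs Q = ∑ i, ψd i * P (ψ i)) :
    ∀ φ : E, tA (τb φ * Q) =
      LinearMap.trace ℂ E (LinearMap.mulRight ℂ φ ∘ₗ P) :=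
  stmt18_general tA t ht τs τb hadj P Q ψ ψd hdual hCardy
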